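/- arXiv:0903.0776 — 3 statements merged into one kernel-verified Lean document; each statement's English description precedes it below -/
import Mathlib

section
/- Let n ≥ 2 be an even integer. There exist a constant c > 0 and a positive integer N ≥ 3 such that for all integers k, p with |k| ≥ N and p ∉ {k, −k}, and for all real t with |t| < 1/ln|k|, one has |(2πk + t)^n − (2πp + t)^n| > c (ln|k|)^{−1} (||k| − |p|| + 1)(|k| + |p|)^{n−1}. -/
open Real

/-
The shifted points `a = 2πk + t`, `b = 2πp + t` satisfy `|a ± b| ≥ |2π(k ± p)| - 2|t|`, and
`k ± p` is a nonzero integer, so both `|a - b|` and `|a + b|` are at least `||k| - |p|| + 1`;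
likewise `max |a| |b| ≥ |k| + |p|`. For even `n`, `|a^n - b^n| = ||a|^n - |b|^n|`, and for
nonnegative `A, B` one has `|A^n - B^n| ≥ |A - B| max(A, B)^(n-1)`, while
`||a| - |b|| = min(|a - b|, |a + b|)`. This gives the bound with `c = 1` even without the
factor `(ln |k|)⁻¹`, which is `< 1` once `|k| ≥ 3 > e`.
-/

lemma min_abs_sub_abs_add_le_abs_abs_sub_abs {G : Type*} [AddCommGroup G] [LinearOrder G]
    [IsOrderedAddMonoid G] (a b : G) : min |a - b| |a + b| ≤ |(|a| - |b|)| := by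
  rcases abs_cases a with ⟨ha, _⟩ | ⟨ha, _⟩ <;> rcases abs_cases b with ⟨hb, _⟩ | ⟨hb, _⟩ <;>
      rw [ha, hb]
  · exact min_le_left _ _
  · rw [sub_neg_eq_add]; exact min_le_right _ _
  · rw [show -a - b = -(a + b) by abel, abs_neg]; exact min_le_right _ _
  · rw [show -a - -b = -(a - b) by abel, abs_neg]; exact min_le_left _ _

section OrderedRing

variable {α : Type*} [CommRing α] [LinearOrder α] [IsStrictOrderedRing α]

lemma sub_mul_pow_le_pow_succ_sub_pow_succ {a b : α} (hb : 0 ≤ b) (hba : b ≤ a) (j : ℕ) :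
    (a - b) * a ^ j ≤ a ^ (j + 1) - b ^ (j + 1) := by
  have := mul_nonneg hb (sub_nonneg.2 (pow_le_pow_left₀ hb hba j))
  linear_combination this

lemma abs_sub_mul_max_pow_le_abs_pow_succ_sub {a b : α} (ha : 0 ≤ a) (hb : 0 ≤ b) (j : ℕ) :
    |a - b| * max a b ^ j ≤ |a ^ (j + 1) - b ^ (j + 1)| := by
  wlog hba : b ≤ a generalizing a b
  · simpa only [abs_sub_comm, max_comm] using this hb ha (le_of_not_ge hba)
  rw [abs_of_nonneg (sub_nonneg.2 hba), max_eq_left hba,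
    abs_of_nonneg (sub_nonneg.2 (pow_le_pow_left₀ hb hba _))]
  exact sub_mul_pow_le_pow_succ_sub_pow_succ hb hba j

lemma Even.min_abs_sub_abs_add_mul_max_pow_le {n : ℕ} (hn : Even n) (hn0 : n ≠ 0) (a b : α) :
    min |a - b| |a + b| * max |a| |b| ^ (n - 1) ≤ |a ^ n - b ^ n| := by
  obtain ⟨j, rfl⟩ := Nat.exists_eq_succ_of_ne_zero hn0
  rw [← hn.pow_abs a, ← hn.pow_abs b, Nat.succ_sub_one]
  calc min |a - b| |a + b| * max |a| |b| ^ j ≤ |(|a| - |b|)| * max |a| |b| ^ j := by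
        gcongr; exact min_abs_sub_abs_add_le_abs_abs_sub_abs a b
    _ ≤ |(|a| ^ (j + 1) - |b| ^ (j + 1))| :=
        abs_sub_mul_max_pow_le_abs_pow_succ_sub (abs_nonneg a) (abs_nonneg b) j

lemma abs_abs_sub_abs_add_one_le_two_mul_abs_sub {a b : α} (h : 1 ≤ |a - b|) :
    |(|a| - |b|)| + 1 ≤ 2 * |a - b| := by
  linarith [abs_abs_sub_abs_le_abs_sub a b]

end OrderedRing

lemma one_le_abs_intCast_sub {k p : ℤ} (h : k ≠ p) : (1 : ℝ) ≤ |(k : ℝ) - p| := by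
  exact_mod_cast Int.one_le_abs (sub_ne_zero.2 h)

lemma inv_log_lt_one_of_three_le {x : ℝ} (hx : 3 ≤ x) : (log x)⁻¹ < 1 :=
  inv_lt_one_of_one_lt₀ ((lt_log_iff_exp_lt (by linarith)).2 (exp_one_lt_three.trans_le hx))

section ShiftedPoints

variable {x y t : ℝ}

lemma abs_abs_sub_abs_add_one_le_abs_shift_sub (hxy : 1 ≤ |x - y|) :
    |(|x| - |y|)| + 1 ≤ |(2 * π * x + t) - (2 * π * y + t)| := by
  have hd := abs_abs_sub_abs_add_one_le_two_mul_abs_sub hxy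
  rw [show 2 * π * x + t - (2 * π * y + t) = 2 * π * (x - y) by ring, abs_mul,
    abs_of_pos (by positivity : (0 : ℝ) < 2 * π)]
  nlinarith [pi_gt_three, abs_nonneg (x - y)]

lemma abs_abs_sub_abs_add_one_le_abs_shift_add (hxy : 1 ≤ |x + y|) (ht : |t| ≤ 1) :
    |(|x| - |y|)| + 1 ≤ |(2 * π * x + t) + (2 * π * y + t)| := by
  have hd := abs_abs_sub_abs_add_one_le_two_mul_abs_sub (b := -y) (by rwa [sub_neg_eq_add])
  rw [abs_neg, sub_neg_eq_add] at hd
  have h := abs_sub_abs_le_abs_sub (2 * π * (x + y)) (-(2 * t))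
  rw [abs_mul, abs_of_pos (by positivity : (0 : ℝ) < 2 * π), abs_neg, abs_mul, abs_two,
    show 2 * π * (x + y) - -(2 * t) = 2 * π * x + t + (2 * π * y + t) by ring] at h
  nlinarith [pi_gt_three, abs_nonneg (x + y)]

lemma abs_add_abs_le_max_abs_shift (hxy : 1 ≤ |x - y|) (ht : |t| ≤ 1) :
    |x| + |y| ≤ max |2 * π * x + t| |2 * π * y + t| := by
  have hx := abs_sub_abs_le_abs_sub (2 * π * x) (-t)
  have hy := abs_sub_abs_le_abs_sub (2 * π * y) (-t)
  simp only [abs_mul, abs_of_pos (by positivity : (0 : ℝ) < 2 * π), abs_neg, sub_neg_eq_add] at hx hy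
  have hsum : 1 ≤ |x| + |y| := hxy.trans (abs_sub _ _)
  have := le_max_left |2 * π * x + t| |2 * π * y + t|
  have := le_max_right |2 * π * x + t| |2 * π * y + t|
  nlinarith [pi_gt_three]

end ShiftedPoints

/-- Let `n ≥ 2` be an even integer. There exist a constant `c > 0` and a
positive integer `N ≥ 3` such that for all integers `k, p` with `|k| ≥ N` and
`p ∉ {k, −k}`, and for all real `t` with `|t| < 1/ln|k|`, one has
`|(2πk + t)^n − (2πp + t)^n| > c (ln|k|)⁻¹ (||k| − |p|| + 1)(|k| + |p|)^{n−1}`. -/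
theorem stmt_2 (n : ℕ) (hn : 2 ≤ n) (heven : Even n) :
    ∃ c : ℝ, 0 < c ∧ ∃ N : ℕ, 3 ≤ N ∧
      ∀ k p : ℤ, (N : ℤ) ≤ |k| → p ∉ ({k, -k} : Set ℤ) →
        ∀ t : ℝ, |t| < (Real.log |(k:ℝ)|)⁻¹ →
          |(2*π*(k:ℝ) + t)^n - (2*π*(p:ℝ) + t)^n| >
            c * (Real.log |(k:ℝ)|)⁻¹ * (|(|(k:ℝ)| - |(p:ℝ)|)| + 1)
              * (|(k:ℝ)| + |(p:ℝ)|)^(n-1) := by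
  refine ⟨1, one_pos, 3, le_rfl, fun k p hk hp t ht => ?_⟩
  simp only [Set.mem_insert_iff, Set.mem_singleton_iff, not_or] at hp
  have hK : (3 : ℝ) ≤ |(k : ℝ)| := by exact_mod_cast hk
  have hlog := inv_log_lt_one_of_three_le hK
  have ht1 : |t| ≤ 1 := by linarith
  have hsub : (1 : ℝ) ≤ |(k : ℝ) - p| := one_le_abs_intCast_sub (Ne.symm hp.1)
  have hadd : (1 : ℝ) ≤ |(k : ℝ) + p| := by
    simpa using one_le_abs_intCast_sub (p := -p) (by omega)
  have hgap := le_min (abs_abs_sub_abs_add_one_le_abs_shift_sub (t := t) hsub)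
    (abs_abs_sub_abs_add_one_le_abs_shift_add hadd ht1)
  have hsize := pow_le_pow_left₀ (by positivity) (abs_add_abs_le_max_abs_shift hsub ht1) (n - 1)
  have hpos : 0 < (|(|(k : ℝ)| - |(p : ℝ)|)| + 1) * (|(k : ℝ)| + |(p : ℝ)|) ^ (n - 1) := by
    positivity
  calc 1 * (log |(k : ℝ)|)⁻¹ * (|(|(k : ℝ)| - |(p : ℝ)|)| + 1) * (|(k : ℝ)| + |(p : ℝ)|) ^ (n - 1)
      < (|(|(k : ℝ)| - |(p : ℝ)|)| + 1) * (|(k : ℝ)| + |(p : ℝ)|) ^ (n - 1) := by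
        rw [one_mul, mul_assoc]; exact mul_lt_of_lt_one_left hpos hlog
    _ ≤ _ := mul_le_mul hgap hsize (by positivity) (by positivity)
    _ ≤ _ := heven.min_abs_sub_abs_add_mul_max_pow_le (by omega) _ _
end

section
/- Let n ≥ 2, m ≥ 1 be integers and c₁ > 0. There exist a constant C > 0 and a positive integer N ≥ 3 such that: for every integer k with |k| ≥ N, every t ∈ [−π/2, 3π/2), and every λ ∈ ℂ with |λ − (2πk + t)^n| ≤ c₁ |k|^{n−1−1/(2m)}, one has Σ_{p ∈ ℤ, p ∉ A(k,n,t)} |p|^{n−2} / |λ − (2πp + t)^n| ≤ C ln|k| / |k|, where for n = 2 the term with p = 0 is interpreted with |p|^{n−2} = 1. -/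
open Real

/-- The set `T(k) = [−π/2, 3π/2) \ ((−1/ln|k|, 1/ln|k|) ∪ (π − 1/ln|k|, π + 1/ln|k|))`. -/
def Tset (k : ℤ) : Set ℝ :=
  Set.Ico (-(π/2)) (3*π/2) \
    (Set.Ioo (-(Real.log |(k:ℝ)|)⁻¹) (Real.log |(k:ℝ)|)⁻¹ ∪
      Set.Ioo (π - (Real.log |(k:ℝ)|)⁻¹) (π + (Real.log |(k:ℝ)|)⁻¹))

open Classical in
/-- The set `A(k,n,t) ⊆ ℤ`: equal to `{k}` if `n` is odd, or if `n` is even and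
`t ∈ T(k)`; equal to `{k, −k}` if `n` is even and `|t| < 1/ln|k|`; and equal to
`{k, −(k+1)}` if `n` is even and `|t − π| < 1/ln|k|`. -/
noncomputable def Aset (n : ℕ) (k : ℤ) (t : ℝ) : Set ℤ :=
  if Odd n then {k}
  else if |t| < (Real.log |(k:ℝ)|)⁻¹ then {k, -k}
  else if |t - π| < (Real.log |(k:ℝ)|)⁻¹ then {k, -(k+1)}
  else {k}

/-!
Write `x_p = 2πp + t`. Once `|k| ≥ N`, the hypothesis puts `λ` within `|k|^(n-1) / (4 ln|k|)`
of `x_k^n`, because `ln|k| = o(|k|^(1/(2m)))`. On the other hand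
`2 |x^n - y^n| ≥ δ · ((|x| + |y|) / 2)^(n-1)`, where `δ = |x - y|` for odd `n` and
`δ = ||x| - |y|| ≥ min(|x - y|, |x + y|)` for even `n` (`powGap`). For `p ∉ A(k,n,t)` this gap is
at least `1/ln|k|`, so that `|λ - x_p^n| ≥ |x_p^n - x_k^n| / 2`, and away from the resonant
indices `p = -k, -(k+1)` it is at least `min(|p - k|, |p + k|)`. Hence the `p`-th term is
`O(1/(|p ∓ k| max(|p|, |k|)))`, plus `O(ln|k|/|k|)` at the resonant indices, and the lattice sum
`∑_p 1/(|p - c| max(|p|, |k|))` is `O(ln|k|/|k|)`: a harmonic sum for `|p - c| ≤ |k|` and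
`∑ 1/j²` beyond.
-/

lemma sub_mul_avg_pow_le_pow_sub_pow {a b : ℝ} (hb : 0 ≤ b) (hba : b ≤ a) (M : ℕ) :
    (a - b) * ((a + b) / 2) ^ M ≤ a ^ (M + 1) - b ^ (M + 1) := by
  have hb_pow : b ^ (M + 1) ≤ b * a ^ M := by
    rw [pow_succ']
    exact mul_le_mul_of_nonneg_left (pow_le_pow_left₀ hb hba M) hb
  calc (a - b) * ((a + b) / 2) ^ M ≤ (a - b) * a ^ M :=
        mul_le_mul_of_nonneg_left (pow_le_pow_left₀ (by linarith) (by linarith) M)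
          (by linarith)
    _ = a ^ (M + 1) - b * a ^ M := by ring
    _ ≤ a ^ (M + 1) - b ^ (M + 1) := by linarith

lemma abs_abs_sub_abs_mul_avg_pow_le {n : ℕ} (hn : n ≠ 0) (hev : Even n) (x y : ℝ) :
    |(|x| - |y|)| * ((|x| + |y|) / 2) ^ (n - 1) ≤ |x ^ n - y ^ n| := by
  obtain ⟨M, rfl⟩ := Nat.exists_eq_succ_of_ne_zero hn
  rw [← hev.pow_abs x, ← hev.pow_abs y, Nat.succ_sub_one]
  wlog h : |y| ≤ |x| generalizing x y
  · simpa only [abs_sub_comm, add_comm] using this y x (le_of_not_ge h)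
  rw [abs_of_nonneg (sub_nonneg.2 h),
    abs_of_nonneg (sub_nonneg.2 (pow_le_pow_left₀ (abs_nonneg y) h _))]
  exact sub_mul_avg_pow_le_pow_sub_pow (abs_nonneg y) h M

lemma abs_sub_mul_avg_pow_le {n : ℕ} (hod : Odd n) (x y : ℝ) :
    |x - y| * ((|x| + |y|) / 2) ^ (n - 1) ≤ 2 * |x ^ n - y ^ n| := by
  obtain ⟨M, rfl⟩ : ∃ M, n = M + 1 := ⟨n - 1, by have := hod.pos; omega⟩
  rw [Nat.add_sub_cancel]
  wlog h : y ≤ x generalizing x y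
  · simpa only [abs_sub_comm, add_comm] using this y x (le_of_not_ge h)
  have hpow : y ^ (M + 1) ≤ x ^ (M + 1) := hod.strictMono_pow.monotone h
  rw [abs_of_nonneg (sub_nonneg.2 h), abs_of_nonneg (sub_nonneg.2 hpow)]
  suffices (x - y) * ((|x| + |y|) / 2) ^ M ≤ x ^ (M + 1) - y ^ (M + 1) by linarith
  rcases le_total 0 y with hy | hy
  · rw [abs_of_nonneg hy, abs_of_nonneg (hy.trans h)]
    exact sub_mul_avg_pow_le_pow_sub_pow hy h M
  rcases le_total x 0 with hx | hx
  · have := sub_mul_avg_pow_le_pow_sub_pow (neg_nonneg.2 hx) (neg_le_neg h) M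
    rw [hod.neg_pow, hod.neg_pow] at this
    rw [abs_of_nonpos hx, abs_of_nonpos hy]
    linarith [show (-y - -x) * ((-y + -x) / 2) ^ M = (x - y) * ((-x + -y) / 2) ^ M by ring]
  -- `y ≤ 0 ≤ x`: power mean inequality
  have hmean := add_pow_le hx (neg_nonneg.2 hy) (M + 1)
  rw [hod.neg_pow, Nat.add_sub_cancel, ← sub_eq_add_neg, ← sub_eq_add_neg] at hmean
  rw [abs_of_nonneg hx, abs_of_nonpos hy, div_pow, ← sub_eq_add_neg, ← mul_div_assoc, ← pow_succ',
    div_le_iff₀ (by positivity), mul_comm]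
  exact hmean

lemma min_abs_sub_abs_add_le (x y : ℝ) : min |x - y| |x + y| ≤ |(|x| - |y|)| := by
  rcases abs_cases x with ⟨hx, _⟩ | ⟨hx, _⟩ <;> rcases abs_cases y with ⟨hy, _⟩ | ⟨hy, _⟩ <;>
    rw [hx, hy]
  · exact min_le_left _ _
  · exact (min_le_right _ _).trans_eq (by rw [sub_neg_eq_add])
  · exact (min_le_right _ _).trans_eq (by rw [← abs_neg]; ring_nf)
  · exact (min_le_left _ _).trans_eq (by rw [← abs_neg]; ring_nf)

noncomputable def powGap (n : ℕ) (x y : ℝ) : ℝ :=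
  if Odd n then |x - y| else |(|x| - |y|)|

lemma powGap_mul_avg_pow_le {n : ℕ} (hn : n ≠ 0) (x y : ℝ) :
    powGap n x y * ((|x| + |y|) / 2) ^ (n - 1) ≤ 2 * |x ^ n - y ^ n| := by
  unfold powGap
  split_ifs with hod
  · exact abs_sub_mul_avg_pow_le hod x y
  · linarith [abs_abs_sub_abs_mul_avg_pow_le hn (Nat.not_odd_iff_even.1 hod) x y,
      abs_nonneg (x ^ n - y ^ n)]

lemma min_le_powGap (n : ℕ) (x y : ℝ) : min |x - y| |x + y| ≤ powGap n x y := by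
  unfold powGap
  split_ifs
  · exact min_le_left _ _
  · exact min_abs_sub_abs_add_le x y

lemma one_le_log_of_three_le {x : ℝ} (hx : 3 ≤ x) : 1 ≤ log x := by
  rw [le_log_iff_exp_le (by linarith)]
  linarith [exp_one_lt_d9]

open Finset in
lemma sum_range_inv_max_mul_max_le {K : ℕ} (hK : K ≠ 0) (n : ℕ) :
    ∑ i ∈ range n, ((max (i : ℝ) 1) * max (i : ℝ) K)⁻¹ ≤ (4 + log K) / K := by
  have hK0 : (0 : ℝ) < K := by positivity
  have hK1 : (1 : ℝ) ≤ K := Nat.one_le_cast.2 (Nat.one_le_iff_ne_zero.2 hK)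
  have hwindow : ∑ i ∈ range (K + 1), (max (i : ℝ) 1)⁻¹ = harmonic K + 1 := by
    rw [sum_range_succ', harmonic]
    push_cast
    congr 1
    · exact sum_congr rfl fun i _ => by rw [max_eq_left (by linarith [i.cast_nonneg (α := ℝ)])]
    · simp
  have hnear : ∑ i ∈ (range n).filter (· ≤ K), ((max (i : ℝ) 1) * max (i : ℝ) K)⁻¹
      ≤ (2 + log K) / K :=
    calc _ ≤ ∑ i ∈ (range n).filter (· ≤ K), (max (i : ℝ) 1)⁻¹ / K :=
          sum_le_sum fun i _ => by
            rw [mul_inv, div_eq_mul_inv]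
            exact mul_le_mul_of_nonneg_left (inv_anti₀ hK0 (le_max_right _ _)) (by positivity)
      _ ≤ ∑ i ∈ range (K + 1), (max (i : ℝ) 1)⁻¹ / K :=
          sum_le_sum_of_subset_of_nonneg
            (fun i hi => by simp only [mem_filter, mem_range] at hi ⊢; omega)
            (fun _ _ _ => by positivity)
      _ = (harmonic K + 1) / K := by rw [← sum_div, hwindow]
      _ ≤ (2 + log K) / K :=
          div_le_div_of_nonneg_right (by linarith [harmonic_le_one_add_log K]) hK0.le
  have hfar : ∑ i ∈ (range n).filter (¬ · ≤ K), ((max (i : ℝ) 1) * max (i : ℝ) K)⁻¹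
      ≤ 2 / K :=
    calc _ = ∑ i ∈ (range n).filter (¬ · ≤ K), ((i : ℝ) ^ 2)⁻¹ :=
          sum_congr rfl fun i hi => by
            have hiK : (K : ℝ) < i := by
              simp only [mem_filter] at hi; exact_mod_cast not_le.1 hi.2
            rw [max_eq_left (by linarith), max_eq_left hiK.le, sq]
      _ ≤ ∑ i ∈ Ioo K n, ((i : ℝ) ^ 2)⁻¹ :=
          sum_le_sum_of_subset_of_nonneg
            (fun i hi => by simp only [mem_filter, mem_range, mem_Ioo] at hi ⊢; omega)
            (fun _ _ _ => by positivity)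
      _ ≤ 2 / (K + 1) := sum_Ioo_inv_sq_le K n
      _ ≤ 2 / K := by gcongr; linarith
  rw [← sum_filter_add_sum_filter_not (range n) (· ≤ K)]
  calc _ ≤ (2 + log K) / K + 2 / K := add_le_add hnear hfar
    _ = (4 + log K) / K := by ring

lemma summable_inv_max_mul_max {K : ℕ} (hK : K ≠ 0) :
    Summable fun i : ℕ => ((max (i : ℝ) 1) * max (i : ℝ) K)⁻¹ :=
  summable_of_sum_range_le (fun _ => by positivity) (sum_range_inv_max_mul_max_le hK)

lemma tsum_inv_max_mul_max_le {K : ℕ} (hK : K ≠ 0) :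
    ∑' i : ℕ, ((max (i : ℝ) 1) * max (i : ℝ) K)⁻¹ ≤ (4 + log K) / K :=
  Real.tsum_le_of_sum_range_le (fun _ => by positivity) (sum_range_inv_max_mul_max_le hK)

lemma summable_and_tsum_int_inv_max_mul_max_le {K : ℕ} (hK : K ≠ 0) :
    Summable (fun j : ℤ => ((max |(j : ℝ)| 1) * max |(j : ℝ)| K)⁻¹) ∧
      ∑' j : ℤ, ((max |(j : ℝ)| 1) * max |(j : ℝ)| K)⁻¹ ≤ 2 * ((4 + log K) / K) := by
  set f : ℤ → ℝ := fun j => ((max |(j : ℝ)| 1) * max |(j : ℝ)| K)⁻¹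
  set g : ℕ → ℝ := fun i => ((max (i : ℝ) 1) * max (i : ℝ) K)⁻¹
  have hg : Summable g := summable_inv_max_mul_max hK
  have hf_nat : (fun i : ℕ => f i) = g := funext fun i => by simp [f, g]
  have hf_neg : (fun i : ℕ => f (-(i + 1))) = fun i => g (i + 1) := funext fun i => by
    simp only [f, g]
    push_cast
    rw [abs_neg, abs_of_nonneg (by positivity)]
  have hf₁ : Summable fun i : ℕ => f i := hf_nat ▸ hg
  have hf₂ : Summable fun i : ℕ => f (-(i + 1)) := hf_neg ▸ (summable_nat_add_iff 1).2 hg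
  refine ⟨hf₁.of_nat_of_neg_add_one hf₂, ?_⟩
  rw [tsum_of_nat_of_neg_add_one hf₁ hf₂, hf_nat, hf_neg]
  linarith [hg.tsum_eq_zero_add, tsum_inv_max_mul_max_le hK, show 0 ≤ g 0 by positivity]

lemma summable_and_tsum_inv_max_abs_sub_mul_max_le {k c : ℤ} (hk : 3 ≤ |(k : ℝ)|)
    (hc : |(c : ℝ)| ≤ |(k : ℝ)|) :
    Summable (fun p : ℤ => ((max |(p : ℝ) - c| 1) * max |(p : ℝ)| |(k : ℝ)|)⁻¹) ∧
      ∑' p : ℤ, ((max |(p : ℝ) - c| 1) * max |(p : ℝ)| |(k : ℝ)|)⁻¹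
        ≤ 20 * log |(k : ℝ)| / |(k : ℝ)| := by
  have hKk : (k.natAbs : ℝ) = |(k : ℝ)| := by rw [Nat.cast_natAbs, Int.cast_abs]
  have hK : k.natAbs ≠ 0 := by
    rw [← Nat.cast_ne_zero (R := ℝ), hKk]; linarith
  obtain ⟨hf, hf_le⟩ := summable_and_tsum_int_inv_max_mul_max_le hK
  rw [hKk] at hf hf_le
  set f : ℤ → ℝ := fun j => ((max |(j : ℝ)| 1) * max |(j : ℝ)| |(k : ℝ)|)⁻¹
  have hf_shift : Summable fun p : ℤ => 2 * f (p - c) :=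
    ((Equiv.subRight c).summable_iff.2 hf).mul_left 2
  have hle (p : ℤ) : ((max |(p : ℝ) - c| 1) * max |(p : ℝ)| |(k : ℝ)|)⁻¹ ≤ 2 * f (p - c) := by
    have hmax : max |(p : ℝ) - c| |(k : ℝ)| ≤ 2 * max |(p : ℝ)| |(k : ℝ)| := by
      have := abs_sub (p : ℝ) c
      apply max_le <;> linarith [le_max_left |(p : ℝ)| |(k : ℝ)|, le_max_right |(p : ℝ)| |(k : ℝ)|]
    simp only [f]
    push_cast
    calc _ ≤ ((max |(p : ℝ) - c| 1) * (max |(p : ℝ) - c| |(k : ℝ)| / 2))⁻¹ :=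
          inv_anti₀ (by positivity) (by gcongr; linarith)
      _ = _ := by ring
  have hsum := Summable.of_nonneg_of_le (fun _ => by positivity) hle hf_shift
  refine ⟨hsum, ?_⟩
  have hlog := one_le_log_of_three_le hk
  calc _ ≤ ∑' p : ℤ, 2 * f (p - c) := hsum.tsum_le_tsum hle hf_shift
    _ = 2 * ∑' j : ℤ, f j := by rw [tsum_mul_left, ← (Equiv.subRight c).tsum_eq f]; rfl
    _ ≤ 2 * (2 * ((4 + log |(k : ℝ)|) / |(k : ℝ)|)) := by gcongr
    _ = 4 * (4 + log |(k : ℝ)|) / |(k : ℝ)| := by ring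
    _ ≤ 20 * log |(k : ℝ)| / |(k : ℝ)| := div_le_div_of_nonneg_right (by linarith) (abs_nonneg _)

lemma self_mem_Aset (n : ℕ) (k : ℤ) (t : ℝ) : k ∈ Aset n k t := by
  unfold Aset
  split_ifs <;> simp

lemma sub_le_abs_two_pi_mul_add {t : ℝ} (ht : t ∈ Set.Ico (-(π / 2)) (3 * π / 2)) (x : ℝ) :
    2 * π * |x| - 3 * π / 2 ≤ |2 * π * x + t| := by
  have htri := abs_sub (2 * π * x + t) t
  rw [add_sub_cancel_right, abs_mul, abs_of_pos two_pi_pos] at htri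
  have ht' : |t| ≤ 3 * π / 2 := abs_le.2 ⟨by linarith [ht.1, pi_pos], ht.2.le⟩
  linarith

lemma max_le_avg_abs_two_pi_mul_add {k : ℤ} {t : ℝ} (hk : 3 ≤ |(k : ℝ)|)
    (ht : t ∈ Set.Ico (-(π / 2)) (3 * π / 2)) (p : ℤ) :
    max (max |(p : ℝ)| 1) |(k : ℝ)| ≤ (|2 * π * p + t| + |2 * π * k + t|) / 2 := by
  have hp := sub_le_abs_two_pi_mul_add ht p
  have hk' := sub_le_abs_two_pi_mul_add ht k
  have hπ := pi_gt_three
  have hp0 := abs_nonneg (p : ℝ)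
  refine max_le (max_le ?_ ?_) ?_ <;> nlinarith

lemma max_abs_sub_one_le_abs_sub {p k : ℤ} (hpk : p ≠ k) (t : ℝ) :
    max |(p : ℝ) - k| 1 ≤ |(2 * π * p + t) - (2 * π * k + t)| := by
  have h1 : (1 : ℝ) ≤ |(p : ℝ) - k| := by
    exact_mod_cast Int.one_le_abs (sub_ne_zero.2 hpk)
  rw [show (2 * π * p + t) - (2 * π * k + t) = 2 * π * ((p : ℝ) - k) by ring, abs_mul,
    abs_of_pos two_pi_pos, max_eq_left h1]
  nlinarith [pi_gt_three]

lemma max_abs_add_one_le_abs_add {p k : ℤ} {t : ℝ} (ht : t ∈ Set.Ico (-(π / 2)) (3 * π / 2))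
    (h₀ : p ≠ -k) (h₁ : p ≠ -(k + 1)) :
    max |(p : ℝ) + k| 1 ≤ |(2 * π * p + t) + (2 * π * k + t)| := by
  have hπ := pi_gt_three
  obtain ⟨ht₁, ht₂⟩ := ht
  rw [show (2 * π * p + t) + (2 * π * k + t) = 2 * π * ((p : ℝ) + k) + 2 * t by ring]
  rcases (by omega : 1 ≤ p + k ∨ p + k ≤ -2) with hq | hq
  · have hq' : (1 : ℝ) ≤ p + k := by exact_mod_cast hq
    rw [abs_of_nonneg (by linarith), abs_of_nonneg (by nlinarith)]
    exact max_le (by nlinarith) (by nlinarith)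
  · have hq' : (p : ℝ) + k ≤ -2 := by exact_mod_cast hq
    rw [abs_of_nonpos (by linarith), abs_of_nonpos (by nlinarith)]
    exact max_le (by nlinarith) (by nlinarith)

lemma inv_log_le_abs_add_of_notMem_Aset {n : ℕ} (hev : Even n) {k p : ℤ} {t : ℝ}
    (hk : 3 ≤ |(k : ℝ)|) (ht : t ∈ Set.Ico (-(π / 2)) (3 * π / 2)) (hp : p ∉ Aset n k t) :
    (log |(k : ℝ)|)⁻¹ ≤ |(2 * π * p + t) + (2 * π * k + t)| := by
  have hL : (log |(k : ℝ)|)⁻¹ ≤ 1 := inv_le_one_of_one_le₀ (one_le_log_of_three_le hk)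
  simp only [Aset, Nat.not_odd_iff_even.2 hev, if_false] at hp
  by_cases h₀ : p = -k
  · subst h₀
    rw [show 2 * π * ((-k : ℤ) : ℝ) + t + (2 * π * k + t) = 2 * t by push_cast; ring, abs_mul,
      abs_two]
    by_cases h : |t| < (log |(k : ℝ)|)⁻¹
    · rw [if_pos h] at hp
      exact (hp (by simp)).elim
    · linarith [not_lt.1 h, abs_nonneg t]
  by_cases h₁ : p = -(k + 1)
  · subst h₁
    rw [show 2 * π * ((-(k + 1) : ℤ) : ℝ) + t + (2 * π * k + t) = 2 * (t - π) by push_cast; ring,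
      abs_mul, abs_two]
    split_ifs at hp with h h'
    · have := abs_sub_abs_le_abs_sub π t
      rw [abs_of_pos pi_pos, abs_sub_comm] at this
      linarith [pi_gt_three]
    · simp at hp
    · linarith [not_lt.1 h', abs_nonneg (t - π)]
  · exact hL.trans ((le_max_right _ _).trans (max_abs_add_one_le_abs_add ht h₀ h₁))

lemma inv_log_le_powGap {n : ℕ} {k p : ℤ} {t : ℝ} (hk : 3 ≤ |(k : ℝ)|)
    (ht : t ∈ Set.Ico (-(π / 2)) (3 * π / 2)) (hp : p ∉ Aset n k t) :
    (log |(k : ℝ)|)⁻¹ ≤ powGap n (2 * π * p + t) (2 * π * k + t) := by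
  have hpk : p ≠ k := fun h => hp (h ▸ self_mem_Aset n k t)
  have hsub : (log |(k : ℝ)|)⁻¹ ≤ |(2 * π * p + t) - (2 * π * k + t)| :=
    (inv_le_one_of_one_le₀ (one_le_log_of_three_le hk)).trans
      ((le_max_right _ _).trans (max_abs_sub_one_le_abs_sub hpk t))
  rcases Nat.even_or_odd n with hev | hod
  · exact (le_min hsub (inv_log_le_abs_add_of_notMem_Aset hev hk ht hp)).trans
      (min_le_powGap n _ _)
  · rwa [powGap, if_pos hod]

lemma abs_sub_le_norm_sub_add_norm_sub (lam : ℂ) (x y : ℝ) :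
    |x - y| ≤ ‖lam - x‖ + ‖lam - y‖ := by
  calc |x - y| = ‖(lam - y) - (lam - x)‖ := by
        rw [sub_sub_sub_cancel_left, ← Complex.ofReal_sub, Complex.norm_real, Real.norm_eq_abs]
    _ ≤ ‖lam - y‖ + ‖lam - x‖ := norm_sub_le _ _
    _ = ‖lam - x‖ + ‖lam - y‖ := add_comm _ _

lemma abs_pow_div_norm_sub_pow_le {n : ℕ} (hn : 2 ≤ n) {k p : ℤ} {t : ℝ} {lam : ℂ}
    (hk : 3 ≤ |(k : ℝ)|) (ht : t ∈ Set.Ico (-(π / 2)) (3 * π / 2))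
    (hlam : ‖lam - ((2 * π * k + t : ℝ) : ℂ) ^ n‖ ≤ |(k : ℝ)| ^ (n - 1) / (4 * log |(k : ℝ)|))
    (hp : p ∉ Aset n k t) :
    |(p : ℝ)| ^ (n - 2) / ‖lam - ((2 * π * p + t : ℝ) : ℂ) ^ n‖
      ≤ 4 * (powGap n (2 * π * p + t) (2 * π * k + t) * max |(p : ℝ)| |(k : ℝ)|)⁻¹ := by
  set X := 2 * π * (p : ℝ) + t
  set Y := 2 * π * (k : ℝ) + t
  set D := powGap n X Y
  set M := max (max |(p : ℝ)| 1) |(k : ℝ)|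
  have hL : 0 < log |(k : ℝ)| := by linarith [one_le_log_of_three_le hk]
  have hD : (log |(k : ℝ)|)⁻¹ ≤ D := inv_log_le_powGap hk ht hp
  have hD0 : 0 < D := (inv_pos.2 hL).trans_le hD
  have hM0 : 0 < M := by positivity
  have hgap : D * M ^ (n - 1) ≤ 2 * |X ^ n - Y ^ n| :=
    (mul_le_mul_of_nonneg_left (pow_le_pow_left₀ hM0.le (max_le_avg_abs_two_pi_mul_add hk ht p) _)
      hD0.le).trans (powGap_mul_avg_pow_le (by omega) X Y)
  have hY : ‖lam - (Y : ℂ) ^ n‖ ≤ D * M ^ (n - 1) / 4 :=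
    calc _ ≤ |(k : ℝ)| ^ (n - 1) / (4 * log |(k : ℝ)|) := hlam
      _ = (log |(k : ℝ)|)⁻¹ * |(k : ℝ)| ^ (n - 1) / 4 := by field_simp
      _ ≤ D * M ^ (n - 1) / 4 := by gcongr; exact le_max_right _ _
  have hX : D * M ^ (n - 1) / 4 ≤ ‖lam - (X : ℂ) ^ n‖ := by
    have := abs_sub_le_norm_sub_add_norm_sub lam (X ^ n) (Y ^ n)
    push_cast at this
    linarith
  have hW : 0 < max |(p : ℝ)| |(k : ℝ)| := by positivity
  have hnum : |(p : ℝ)| ^ (n - 2) ≤ M ^ (n - 1) / max |(p : ℝ)| |(k : ℝ)| := by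
    rw [le_div_iff₀ hW, show n - 1 = n - 2 + 1 by omega, pow_succ]
    gcongr
    · exact (le_max_left _ _).trans (le_max_left _ _)
    · exact max_le_max (le_max_left _ _) le_rfl
  calc |(p : ℝ)| ^ (n - 2) / ‖lam - (X : ℂ) ^ n‖
      ≤ M ^ (n - 1) / max |(p : ℝ)| |(k : ℝ)| / (D * M ^ (n - 1) / 4) :=
        div_le_div₀ (by positivity) hnum (by positivity) hX
    _ = 4 * (D * max |(p : ℝ)| |(k : ℝ)|)⁻¹ := by field_simp

lemma inv_le_inv_add_inv_of_min_le {a b d : ℝ} (ha : 0 < a) (hb : 0 < b) (h : min a b ≤ d) :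
    d⁻¹ ≤ a⁻¹ + b⁻¹ := by
  rcases min_choice a b with hab | hab <;> rw [hab] at h
  · linarith [inv_anti₀ ha h, inv_pos.2 hb]
  · linarith [inv_anti₀ hb h, inv_pos.2 ha]

noncomputable def majorant (k p : ℤ) : ℝ :=
  ((max |(p : ℝ) - k| 1) * max |(p : ℝ)| |(k : ℝ)|)⁻¹
    + ((max |(p : ℝ) + k| 1) * max |(p : ℝ)| |(k : ℝ)|)⁻¹
    + (if p = -k then log |(k : ℝ)| / |(k : ℝ)| else 0)
    + (if p = -(k + 1) then log |(k : ℝ)| / |(k : ℝ)| else 0)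

lemma majorant_nonneg {k : ℤ} (hk : 3 ≤ |(k : ℝ)|) (p : ℤ) : 0 ≤ majorant k p := by
  have := one_le_log_of_three_le hk
  unfold majorant
  split_ifs <;> positivity

lemma inv_powGap_mul_max_le_majorant {n : ℕ} {k p : ℤ} {t : ℝ} (hk : 3 ≤ |(k : ℝ)|)
    (ht : t ∈ Set.Ico (-(π / 2)) (3 * π / 2)) (hp : p ∉ Aset n k t) :
    (powGap n (2 * π * p + t) (2 * π * k + t) * max |(p : ℝ)| |(k : ℝ)|)⁻¹ ≤ majorant k p := by
  set D := powGap n (2 * π * p + t) (2 * π * k + t)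
  set W := max |(p : ℝ)| |(k : ℝ)|
  have hL := one_le_log_of_three_le hk
  have hD := inv_log_le_powGap hk ht hp
  have hD0 : 0 < D := (inv_pos.2 (by linarith)).trans_le hD
  have hresonant : (D * W)⁻¹ ≤ log |(k : ℝ)| / |(k : ℝ)| := by
    rw [div_eq_mul_inv, ← inv_inv (log _), ← mul_inv]
    exact inv_anti₀ (by positivity) (mul_le_mul hD (le_max_right _ _) (by positivity) hD0.le)
  have hpk : p ≠ k := fun h => hp (h ▸ self_mem_Aset n k t)
  have hsplit : 0 ≤ ((max |(p : ℝ) - k| 1) * W)⁻¹ + ((max |(p : ℝ) + k| 1) * W)⁻¹ := by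
    positivity
  unfold majorant
  split_ifs with h₀ h₁ h₁
  · omega
  · linarith
  · linarith
  · have hmin : min (max |(p : ℝ) - k| 1) (max |(p : ℝ) + k| 1) ≤ D :=
      (min_le_min (max_abs_sub_one_le_abs_sub hpk t) (max_abs_add_one_le_abs_add ht h₀ h₁)).trans
        (min_le_powGap n _ _)
    have := inv_le_inv_add_inv_of_min_le (a := max |(p : ℝ) - k| 1 * W)
      (b := max |(p : ℝ) + k| 1 * W) (d := D * W) (by positivity) (by positivity)
      (by rw [← min_mul_of_nonneg _ _ (by positivity : 0 ≤ W)]; gcongr)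
    linarith

lemma summable_majorant_and_tsum_le {k : ℤ} (hk : 3 ≤ |(k : ℝ)|) :
    Summable (majorant k) ∧ ∑' p, majorant k p ≤ 42 * log |(k : ℝ)| / |(k : ℝ)| := by
  obtain ⟨hs₁, hS₁⟩ := summable_and_tsum_inv_max_abs_sub_mul_max_le hk le_rfl
  obtain ⟨hs₂, hS₂⟩ := summable_and_tsum_inv_max_abs_sub_mul_max_le (c := -k) hk
    (by rw [Int.cast_neg, abs_neg])
  simp only [Int.cast_neg, sub_neg_eq_add] at hs₂ hS₂
  have hs₃ := (hasSum_ite_eq (-k) (log |(k : ℝ)| / |(k : ℝ)|)).summable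
  have hs₄ := (hasSum_ite_eq (-(k + 1)) (log |(k : ℝ)| / |(k : ℝ)|)).summable
  have hsum : Summable (majorant k) := ((hs₁.add hs₂).add hs₃).add hs₄
  refine ⟨hsum, ?_⟩
  unfold majorant
  rw [Summable.tsum_add ((hs₁.add hs₂).add hs₃) hs₄, Summable.tsum_add (hs₁.add hs₂) hs₃,
    Summable.tsum_add hs₁ hs₂, tsum_ite_eq, tsum_ite_eq]
  rw [mul_div_assoc] at hS₁ hS₂ ⊢
  linarith

lemma exists_nat_forall_mul_log_le_rpow (c : ℝ) {r : ℝ} (hr : 0 < r) :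
    ∃ N : ℕ, ∀ x : ℝ, N ≤ x → c * log x ≤ x ^ r := by
  obtain ⟨x₀, hx₀⟩ := Filter.eventually_atTop.1
    (((isLittleO_log_rpow_atTop hr).const_mul_left c).bound one_pos)
  refine ⟨⌈x₀⌉₊, fun x hx => ?_⟩
  have hx0 : 0 ≤ x := (Nat.cast_nonneg _).trans hx
  have := hx₀ x ((Nat.le_ceil x₀).trans hx)
  rw [one_mul, Real.norm_of_nonneg (rpow_nonneg hx0 r)] at this
  exact (Real.le_norm_self _).trans this

lemma mul_rpow_sub_le_div_log {c r x : ℝ} {n : ℕ} (hn : 1 ≤ n) (hx : 1 < x)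
    (h : 4 * c * log x ≤ x ^ r) :
    c * x ^ ((n : ℝ) - 1 - r) ≤ x ^ (n - 1) / (4 * log x) := by
  have hx0 : 0 < x := by linarith
  have hL : 0 < log x := log_pos hx
  rw [rpow_sub hx0, ← Nat.cast_one, ← Nat.cast_sub hn, rpow_natCast, mul_div_assoc',
    div_le_div_iff₀ (rpow_pos_of_pos hx0 r) (by positivity)]
  calc c * x ^ (n - 1) * (4 * log x) = x ^ (n - 1) * (4 * c * log x) := by ring
    _ ≤ x ^ (n - 1) * x ^ r := by gcongr

lemma summable_and_tsum_subtype_le {α : Type*} {P : α → Prop} {f g : α → ℝ}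
    (hf : ∀ a, P a → 0 ≤ f a) (hfg : ∀ a, P a → f a ≤ g a) (hg₀ : ∀ a, 0 ≤ g a)
    (hg : Summable g) :
    Summable (fun a : {a // P a} => f a) ∧ ∑' a : {a // P a}, f a ≤ ∑' a, g a := by
  have hg' : Summable fun a : {a // P a} => g a := hg.comp_injective Subtype.val_injective
  have hf' : Summable fun a : {a // P a} => f a :=
    hg'.of_nonneg_of_le (fun a => hf a a.2) (fun a => hfg a a.2)
  exact ⟨hf', (hf'.tsum_le_tsum (fun a : {a // P a} => hfg a a.2) hg').trans
    (Summable.tsum_subtype_le g {a | P a} hg₀ hg)⟩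

theorem stmt_6_general (n m : ℕ) (hn : 2 ≤ n) (hm : 1 ≤ m) (c₁ : ℝ) :
    ∃ C : ℝ, 0 < C ∧ ∃ N : ℕ, 3 ≤ N ∧
      ∀ k : ℤ, (N : ℤ) ≤ |k| →
        ∀ t ∈ Set.Ico (-(π/2)) (3*π/2),
          ∀ lam : ℂ,
            norm (lam - ((2*π*(k:ℝ) + t : ℝ) : ℂ)^n)
              ≤ c₁ * |(k:ℝ)| ^ ((n:ℝ) - 1 - 1/(2*(m:ℝ))) →
            Summable (fun p : {p : ℤ // p ∉ Aset n k t} =>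
              |(p.1:ℝ)|^(n-2) / norm (lam - ((2*π*(p.1:ℝ) + t : ℝ) : ℂ)^n)) ∧
            (∑' p : {p : ℤ // p ∉ Aset n k t},
                |(p.1:ℝ)|^(n-2) / norm (lam - ((2*π*(p.1:ℝ) + t : ℝ) : ℂ)^n))
              ≤ C * Real.log |(k:ℝ)| / |(k:ℝ)| := by
  obtain ⟨N, hN⟩ := exists_nat_forall_mul_log_le_rpow (4 * c₁) (r := 1 / (2 * m)) (by positivity)
  refine ⟨4 * 42, by norm_num, max N 3, le_max_right _ _, fun k hk t ht lam hlam => ?_⟩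
  have hk' : ((max N 3 : ℕ) : ℝ) ≤ |(k : ℝ)| := by rw [← Int.cast_abs]; exact_mod_cast hk
  rw [Nat.cast_max] at hk'
  have hk₃ : 3 ≤ |(k : ℝ)| := by exact_mod_cast (le_max_right _ _).trans hk'
  have hlam' := hlam.trans (mul_rpow_sub_le_div_log (by omega) (by linarith)
    (hN _ ((le_max_left _ _).trans hk')))
  obtain ⟨hmaj, hmaj_le⟩ := summable_majorant_and_tsum_le hk₃
  obtain ⟨hsum, hsum_le⟩ := summable_and_tsum_subtype_le (fun _ _ => by positivity)
    (fun p hp => (abs_pow_div_norm_sub_pow_le hn hk₃ ht hlam' hp).trans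
      (mul_le_mul_of_nonneg_left (inv_powGap_mul_max_le_majorant hk₃ ht hp) (by norm_num)))
    (fun p => mul_nonneg (by norm_num) (majorant_nonneg hk₃ p)) (hmaj.mul_left 4)
  refine ⟨hsum, ?_⟩
  calc _ ≤ ∑' p, 4 * majorant k p := hsum_le
    _ = 4 * ∑' p, majorant k p := tsum_mul_left
    _ ≤ 4 * (42 * log |(k : ℝ)| / |(k : ℝ)|) := by gcongr
    _ = 4 * 42 * log |(k : ℝ)| / |(k : ℝ)| := by ring

/-- Let `n ≥ 2, m ≥ 1` be integers and `c₁ > 0`. There exist a constant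
`C > 0` and a positive integer `N ≥ 3` such that: for every integer `k` with `|k| ≥ N`,
every `t ∈ [−π/2, 3π/2)`, and every `λ ∈ ℂ` with `|λ − (2πk + t)^n| ≤ c₁ |k|^{n−1−1/(2m)}`,
one has `Σ_{p ∈ ℤ, p ∉ A(k,n,t)} |p|^{n−2} / |λ − (2πp + t)^n| ≤ C ln|k| / |k|`
(for `n = 2` the term with `p = 0` has `|p|^{n−2} = 1`, as the natural-number power
`|p|^0 = 1` in Lean). -/
theorem stmt_6 (n m : ℕ) (hn : 2 ≤ n) (hm : 1 ≤ m) (c₁ : ℝ) (hc₁ : 0 < c₁) :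
    ∃ C : ℝ, 0 < C ∧ ∃ N : ℕ, 3 ≤ N ∧
      ∀ k : ℤ, (N : ℤ) ≤ |k| →
        ∀ t ∈ Set.Ico (-(π/2)) (3*π/2),
          ∀ lam : ℂ,
            norm (lam - ((2*π*(k:ℝ) + t : ℝ) : ℂ)^n)
              ≤ c₁ * |(k:ℝ)| ^ ((n:ℝ) - 1 - 1/(2*(m:ℝ))) →
            Summable (fun p : {p : ℤ // p ∉ Aset n k t} =>
              |(p.1:ℝ)|^(n-2) / norm (lam - ((2*π*(p.1:ℝ) + t : ℝ) : ℂ)^n)) ∧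
            (∑' p : {p : ℤ // p ∉ Aset n k t},
                |(p.1:ℝ)|^(n-2) / norm (lam - ((2*π*(p.1:ℝ) + t : ℝ) : ℂ)^n))
              ≤ C * Real.log |(k:ℝ)| / |(k:ℝ)| :=
  stmt_6_general n m hn hm c₁
end

section
/- Let n ≥ 2, m ≥ 1 be integers and c₁ > 0. There exist a constant C > 0 and a positive integer N ≥ 3 such that: for every integer k with |k| ≥ N, every t ∈ [−π/2, 3π/2), and every λ ∈ ℂ with |λ − (2πk + t)^n| ≤ c₁ |k|^{n−1−1/(2m)}, one has Σ_{p ∈ ℤ, p ∉ A(k,n,t)} |k|^{2n−4} / |λ − (2πp + t)^n|² ≤ C (ln|k|)² / k². -/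
open Real

/-!
Write `x = 2πk + t` and `y = 2πp + t`, so that `|x| ≥ |k|`. Factoring `yⁿ - xⁿ` gives
`|yⁿ - xⁿ| ≥ δ · max(|x|, |y|)ⁿ⁻¹ / 2`, where `δ = |y - x|` for odd `n` and
`δ = min(|y - x|, |y + x|)` for even `n`. Here `|y - x| = 2π|p - k|`, while
`|y + x| = 2|t + π(p + k)|` is of order `1 + |p + k|` except when `p + k ∈ {-1, 0, 1}`; in those
three cases the definition of `A(k,n,t)` gives `|y + x| ≥ 2 / ln|k|` unless `p ∈ A(k,n,t)`. Hence
`|yⁿ - xⁿ| ≳ (1 + d_p) |k|ⁿ⁻¹ / ln|k|` with `d_p = min(|p - k|, |p + k|)`. Since `1/(2m) > 0`,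
the hypothesis on `λ` makes `|λ - xⁿ|` a small fraction of `|k|ⁿ⁻¹ / ln|k|` once `|k|` is large,
so the `p`-th term is `≲ (ln|k|)² / k² · (1 + d_p)⁻²`, and `∑ₚ (1 + d_p)⁻² ≤ 2 ∑_q (1 + |q|)⁻²`.
-/

open Set Filter

theorem abs_sub_mul_max_pow_le_abs_pow_sub {x y : ℝ} (hx : 0 ≤ x) (hy : 0 ≤ y) (n : ℕ) :
    |y - x| * max x y ^ n ≤ |y ^ (n + 1) - x ^ (n + 1)| := by
  wlog hxy : x ≤ y generalizing x y
  · simpa only [abs_sub_comm, max_comm] using this hy hx (le_of_not_ge hxy)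
  have hpow : x ^ n ≤ y ^ n := pow_le_pow_left₀ hx hxy n
  rw [max_eq_right hxy, abs_of_nonneg (sub_nonneg.2 hxy),
    abs_of_nonneg (sub_nonneg.2 (pow_le_pow_left₀ hx hxy _)), pow_succ', pow_succ']
  nlinarith

theorem min_abs_sub_abs_add_le_abs_abs_sub_abs_s7 (x y : ℝ) :
    min |y - x| |y + x| ≤ |(|y| - |x|)| := by
  rcases abs_cases x with ⟨hx, -⟩ | ⟨hx, -⟩ <;> rcases abs_cases y with ⟨hy, -⟩ | ⟨hy, -⟩ <;>
    rw [hx, hy]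
  · exact min_le_left _ _
  · rw [show -y - x = -(y + x) by ring, abs_neg]; exact min_le_right _ _
  · rw [sub_neg_eq_add]; exact min_le_right _ _
  · rw [neg_sub_neg, abs_sub_comm]; exact min_le_left _ _

theorem min_abs_sub_abs_add_mul_max_pow_le_of_even {n : ℕ} (hn : Even (n + 1)) (x y : ℝ) :
    min |y - x| |y + x| * max |x| |y| ^ n ≤ |y ^ (n + 1) - x ^ (n + 1)| := by
  calc min |y - x| |y + x| * max |x| |y| ^ n
      ≤ |(|y| - |x|)| * max |x| |y| ^ n := by
        gcongr; exact min_abs_sub_abs_add_le_abs_abs_sub_abs_s7 x y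
    _ ≤ |(|y| ^ (n + 1) - |x| ^ (n + 1))| :=
        abs_sub_mul_max_pow_le_abs_pow_sub (abs_nonneg x) (abs_nonneg y) n
    _ = |y ^ (n + 1) - x ^ (n + 1)| := by rw [hn.pow_abs, hn.pow_abs]

theorem abs_sub_mul_max_pow_le_two_mul_abs_pow_sub_of_odd {n : ℕ} (hn : Odd (n + 1)) (x y : ℝ) :
    |y - x| * max |x| |y| ^ n ≤ 2 * |y ^ (n + 1) - x ^ (n + 1)| := by
  wlog hy : 0 ≤ y generalizing x y
  · have := this (-x) (-y) (by linarith)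
    rwa [hn.neg_pow, hn.neg_pow, abs_neg, abs_neg, neg_sub_neg, neg_sub_neg, abs_sub_comm,
      abs_sub_comm (x ^ (n + 1))] at this
  rcases le_total 0 x with hx | hx
  · have := abs_sub_mul_max_pow_le_abs_pow_sub hx hy n
    rw [abs_of_nonneg hx, abs_of_nonneg hy]
    linarith [abs_nonneg (y ^ (n + 1) - x ^ (n + 1))]
  · -- opposite signs: `y ^ (n + 1) - x ^ (n + 1) = |y| ^ (n + 1) + |x| ^ (n + 1)`
    set M := max |x| |y|
    have hM : |y - x| ≤ 2 * M := by
      rw [abs_of_nonneg (by linarith)]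
      have hxM : -x ≤ M := abs_of_nonpos hx ▸ le_max_left |x| |y|
      have hyM : y ≤ M := abs_of_nonneg hy ▸ le_max_right |x| |y|
      linarith
    have hxy : M ^ (n + 1) ≤ y ^ (n + 1) - x ^ (n + 1) := by
      have hxn : x ^ (n + 1) ≤ 0 := hn.pow_nonpos hx
      rcases max_choice |x| |y| with h | h <;> simp only [M, h]
      · rw [abs_of_nonpos hx, hn.neg_pow]; linarith [pow_nonneg hy (n + 1)]
      · rw [abs_of_nonneg hy]; linarith
    calc |y - x| * M ^ n ≤ 2 * M * M ^ n := by gcongr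
      _ = 2 * M ^ (n + 1) := by ring
      _ ≤ 2 * |y ^ (n + 1) - x ^ (n + 1)| := by gcongr; exact hxy.trans (le_abs_self _)

theorem mul_max_pow_le_two_mul_abs_pow_sub {n : ℕ} {x y δ : ℝ} (h₁ : δ ≤ |y - x|)
    (h₂ : Even (n + 1) → δ ≤ |y + x|) :
    δ * max |x| |y| ^ n ≤ 2 * |y ^ (n + 1) - x ^ (n + 1)| := by
  rcases Nat.even_or_odd (n + 1) with hn | hn
  · calc δ * max |x| |y| ^ n ≤ min |y - x| |y + x| * max |x| |y| ^ n := by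
          gcongr; exact le_min h₁ (h₂ hn)
      _ ≤ |y ^ (n + 1) - x ^ (n + 1)| := min_abs_sub_abs_add_mul_max_pow_le_of_even hn x y
      _ ≤ 2 * |y ^ (n + 1) - x ^ (n + 1)| := by linarith [abs_nonneg (y ^ (n + 1) - x ^ (n + 1))]
  · calc δ * max |x| |y| ^ n ≤ |y - x| * max |x| |y| ^ n := by gcongr
      _ ≤ 2 * |y ^ (n + 1) - x ^ (n + 1)| :=
          abs_sub_mul_max_pow_le_two_mul_abs_pow_sub_of_odd hn x y

theorem summable_inv_one_add_abs_sq : Summable fun q : ℤ => (1 + |(q : ℝ)|)⁻¹ ^ 2 := by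
  have h : Summable fun n : ℕ => (1 + |(n : ℝ)|)⁻¹ ^ 2 := by
    have := (summable_nat_add_iff 1).2 (Real.summable_nat_pow_inv.2 one_lt_two)
    simpa [add_comm, inv_pow] using this
  rw [summable_int_iff_summable_nat_and_neg]
  simpa using h

theorem summable_inv_one_add_abs_sub_sq (k : ℤ) :
    Summable fun p : ℤ => (1 + |(p : ℝ) - k|)⁻¹ ^ 2 := by
  simpa only [Function.comp_def, Equiv.subRight_apply, Int.cast_sub] using
    (Equiv.subRight k).summable_iff.2 summable_inv_one_add_abs_sq

theorem tsum_inv_one_add_abs_sub_sq (k : ℤ) :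
    ∑' p : ℤ, (1 + |(p : ℝ) - k|)⁻¹ ^ 2 = ∑' q : ℤ, (1 + |(q : ℝ)|)⁻¹ ^ 2 := by
  simpa only [Equiv.subRight_apply, Int.cast_sub] using
    (Equiv.subRight k).tsum_eq fun q : ℤ => (1 + |(q : ℝ)|)⁻¹ ^ 2

theorem inv_one_add_min_sq_le (a b : ℝ) :
    (1 + min a b)⁻¹ ^ 2 ≤ (1 + a)⁻¹ ^ 2 + (1 + b)⁻¹ ^ 2 := by
  rcases min_choice a b with h | h <;> rw [h]
  · linarith [pow_two_nonneg (1 + b)⁻¹]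
  · linarith [pow_two_nonneg (1 + a)⁻¹]

section MinWeight

variable (k : ℤ)

theorem inv_one_add_min_abs_sq_le (p : ℤ) :
    (1 + min |(p : ℝ) - k| |(p : ℝ) + k|)⁻¹ ^ 2 ≤
      (1 + |(p : ℝ) - k|)⁻¹ ^ 2 + (1 + |(p : ℝ) - (-k : ℤ)|)⁻¹ ^ 2 := by
  simpa using inv_one_add_min_sq_le |(p : ℝ) - k| |(p : ℝ) + k|

theorem summable_inv_one_add_min_abs_sq :
    Summable fun p : ℤ => (1 + min |(p : ℝ) - k| |(p : ℝ) + k|)⁻¹ ^ 2 :=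
  .of_nonneg_of_le (fun _ => by positivity) (inv_one_add_min_abs_sq_le k)
    ((summable_inv_one_add_abs_sub_sq k).add (summable_inv_one_add_abs_sub_sq (-k)))

theorem tsum_inv_one_add_min_abs_sq_le :
    ∑' p : ℤ, (1 + min |(p : ℝ) - k| |(p : ℝ) + k|)⁻¹ ^ 2 ≤
      2 * ∑' q : ℤ, (1 + |(q : ℝ)|)⁻¹ ^ 2 := by
  have hs := summable_inv_one_add_abs_sub_sq
  calc _ ≤ ∑' p : ℤ, ((1 + |(p : ℝ) - k|)⁻¹ ^ 2 + (1 + |(p : ℝ) - (-k : ℤ)|)⁻¹ ^ 2) :=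
        (summable_inv_one_add_min_abs_sq k).tsum_le_tsum (inv_one_add_min_abs_sq_le k)
          ((hs k).add (hs (-k)))
    _ = 2 * ∑' q : ℤ, (1 + |(q : ℝ)|)⁻¹ ^ 2 := by
        rw [(hs k).tsum_add (hs (-k)), tsum_inv_one_add_abs_sub_sq, tsum_inv_one_add_abs_sub_sq,
          two_mul]

end MinWeight

theorem eventually_mul_rpow_sub_le_pow_div_log {r c : ℝ} (hr : 0 < r) (hc : 0 < c) (n : ℕ) :
    ∀ᶠ x : ℝ in atTop, c * x ^ ((n : ℝ) - r) ≤ x ^ n / log x := by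
  filter_upwards [(isLittleO_log_rpow_atTop hr).bound (inv_pos.2 hc), eventually_gt_atTop 1]
    with x hlog hx
  have hx0 : 0 < x := by linarith
  have hlog0 : 0 < log x := log_pos hx
  have hxr : 0 < x ^ r := rpow_pos_of_pos hx0 r
  rw [norm_of_nonneg hlog0.le, norm_of_nonneg hxr.le, ← div_eq_inv_mul, le_div_iff₀ hc] at hlog
  rw [rpow_sub hx0, rpow_natCast, le_div_iff₀ hlog0]
  calc c * (x ^ n / x ^ r) * log x = x ^ n / x ^ r * (log x * c) := by ring
    _ ≤ x ^ n / x ^ r * x ^ r := by gcongr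
    _ = x ^ n := div_mul_cancel₀ _ hxr.ne'

theorem one_add_abs_le_two_mul_abs_add_pi_mul {q t : ℝ} (hq : 2 ≤ |q|) (ht : |t| ≤ 3 * π / 2) :
    1 + |q| ≤ 2 * |t + π * q| := by
  have h : π * |q| ≤ |t + π * q| + |t| := by
    calc π * |q| = |t + π * q - t| := by rw [add_sub_cancel_left, abs_mul, abs_of_pos pi_pos]
      _ ≤ |t + π * q| + |t| := abs_sub _ _
  nlinarith [pi_gt_three]

theorem abs_le_abs_two_pi_mul_add {k t : ℝ} (hk : 1 ≤ |k|) (ht : |t| ≤ 3 * π / 2) :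
    |k| ≤ |2 * π * k + t| := by
  have h := one_add_abs_le_two_mul_abs_add_pi_mul (q := 2 * k)
    (by rw [abs_mul, abs_two]; linarith) ht
  rw [abs_mul, abs_two] at h
  rw [show 2 * π * k + t = t + π * (2 * k) by ring]
  linarith

theorem abs_le_three_pi_div_two_of_mem_Ico {t : ℝ} (ht : t ∈ Ico (-(π / 2)) (3 * π / 2)) :
    |t| ≤ 3 * π / 2 :=
  abs_le.2 ⟨by linarith [ht.1, pi_pos], ht.2.le⟩

section Aset

variable {n : ℕ} {k p : ℤ} {t : ℝ}

theorem mem_Aset_self : k ∈ Aset n k t := by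
  unfold Aset; split_ifs <;> simp

theorem inv_log_le_abs_add_pi_mul_of_notMem_Aset (hn : ¬Odd n) (hk : 1 ≤ log |(k : ℝ)|)
    (ht : t ∈ Ico (-(π / 2)) (3 * π / 2)) (hp : p ∉ Aset n k t) (hpk : |p + k| ≤ 1) :
    (log |(k : ℝ)|)⁻¹ ≤ |t + π * ((p + k : ℤ) : ℝ)| := by
  have hL : (log |(k : ℝ)|)⁻¹ ≤ 1 := inv_le_one_of_one_le₀ hk
  obtain h | h | h : p + k = -1 ∨ p + k = 0 ∨ p + k = 1 := by
    have := abs_le.1 hpk; omega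
  · rw [h, Int.cast_neg, Int.cast_one, mul_neg_one, ← sub_eq_add_neg]
    by_cases h0 : |t| < (log |(k : ℝ)|)⁻¹
    · have := abs_sub_abs_le_abs_sub π t
      rw [abs_of_pos pi_pos, abs_sub_comm] at this
      linarith [pi_gt_three]
    · by_contra h1
      apply hp
      rw [show p = -(k + 1) by omega, Aset, if_neg hn, if_neg h0, if_pos (lt_of_not_ge h1)]
      exact Set.mem_insert_of_mem _ rfl
  · rw [h, Int.cast_zero, mul_zero, add_zero]
    by_contra h1
    apply hp
    rw [show p = -k by omega, Aset, if_neg hn, if_pos (lt_of_not_ge h1)]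
    exact Set.mem_insert_of_mem _ rfl
  · rw [h, Int.cast_one, mul_one]
    linarith [le_abs_self (t + π), pi_gt_three, ht.1]

end Aset

section Separation

variable {n : ℕ} {k p : ℤ} {t : ℝ}

theorem one_add_min_div_log_le_abs_sub (hk : 1 ≤ log |(k : ℝ)|) (hp : p ∉ Aset n k t) :
    (1 + min |(p : ℝ) - k| |(p : ℝ) + k|) / log |(k : ℝ)| ≤
      |(2 * π * p + t) - (2 * π * k + t)| := by
  have hpk : p ≠ k := fun h => hp (h ▸ mem_Aset_self)
  have h1 : 1 ≤ |(p : ℝ) - k| := by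
    rw [← Int.cast_sub, ← Int.cast_abs]; exact_mod_cast Int.one_le_abs (sub_ne_zero.2 hpk)
  calc _ ≤ 1 + min |(p : ℝ) - k| |(p : ℝ) + k| := div_le_self (by positivity) hk
    _ ≤ 1 + |(p : ℝ) - k| := by gcongr; exact min_le_left _ _
    _ ≤ 2 * π * |(p : ℝ) - k| := by nlinarith [pi_gt_three]
    _ = |(2 * π * p + t) - (2 * π * k + t)| := by
        rw [show (2 * π * p + t) - (2 * π * k + t) = 2 * π * (p - k) by ring, abs_mul,
          abs_of_pos (by positivity : (0 : ℝ) < 2 * π)]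

theorem one_add_min_div_log_le_abs_add (hn : ¬Odd n) (hk : 1 ≤ log |(k : ℝ)|)
    (ht : t ∈ Ico (-(π / 2)) (3 * π / 2)) (hp : p ∉ Aset n k t) :
    (1 + min |(p : ℝ) - k| |(p : ℝ) + k|) / log |(k : ℝ)| ≤
      |(2 * π * p + t) + (2 * π * k + t)| := by
  have hL : 0 < log |(k : ℝ)| := by linarith
  have hd : |(p : ℝ) + k| = |((p + k : ℤ) : ℝ)| := by push_cast; rfl
  rw [show (2 * π * p + t) + (2 * π * k + t) = 2 * (t + π * ((p + k : ℤ) : ℝ)) by push_cast; ring,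
    abs_mul, abs_two]
  by_cases hpk : |p + k| ≤ 1
  · have hmin : min |(p : ℝ) - k| |(p : ℝ) + k| ≤ 1 := by
      refine (min_le_right _ _).trans ?_
      rw [hd, ← Int.cast_abs]; exact_mod_cast hpk
    calc _ ≤ 2 / log |(k : ℝ)| := by gcongr; linarith
      _ = 2 * (log |(k : ℝ)|)⁻¹ := div_eq_mul_inv _ _
      _ ≤ 2 * |t + π * ((p + k : ℤ) : ℝ)| := by
          gcongr; exact inv_log_le_abs_add_pi_mul_of_notMem_Aset hn hk ht hp hpk
  · have h2 : 2 ≤ |((p + k : ℤ) : ℝ)| := by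
      rw [← Int.cast_abs]; exact_mod_cast (by omega : 2 ≤ |p + k|)
    calc _ ≤ 1 + min |(p : ℝ) - k| |(p : ℝ) + k| := div_le_self (by positivity) hk
      _ ≤ 1 + |((p + k : ℤ) : ℝ)| := by rw [← hd]; gcongr; exact min_le_right _ _
      _ ≤ 2 * |t + π * ((p + k : ℤ) : ℝ)| :=
          one_add_abs_le_two_mul_abs_add_pi_mul h2 (abs_le_three_pi_div_two_of_mem_Ico ht)

theorem one_add_min_mul_pow_div_log_le (hn : 1 ≤ n) (hk : 1 ≤ log |(k : ℝ)|)
    (ht : t ∈ Ico (-(π / 2)) (3 * π / 2)) (hp : p ∉ Aset n k t) :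
    (1 + min |(p : ℝ) - k| |(p : ℝ) + k|) * |(k : ℝ)| ^ (n - 1) / log |(k : ℝ)| ≤
      2 * |(2 * π * p + t) ^ n - (2 * π * k + t) ^ n| := by
  obtain ⟨j, rfl⟩ : ∃ j, n = j + 1 := ⟨n - 1, by omega⟩
  have hL : 0 < log |(k : ℝ)| := by linarith
  have hk1 : 1 ≤ |(k : ℝ)| := hk.trans (log_le_self (abs_nonneg _))
  have hx : |(k : ℝ)| ≤ |2 * π * k + t| :=
    abs_le_abs_two_pi_mul_add hk1 (abs_le_three_pi_div_two_of_mem_Ico ht)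
  rw [Nat.add_sub_cancel, mul_div_right_comm]
  calc _ ≤ (1 + min |(p : ℝ) - k| |(p : ℝ) + k|) / log |(k : ℝ)| *
          max |2 * π * k + t| |2 * π * p + t| ^ j := by
        gcongr; exact hx.trans (le_max_left _ _)
    _ ≤ _ := mul_max_pow_le_two_mul_abs_pow_sub (one_add_min_div_log_le_abs_sub hk hp)
        fun he => one_add_min_div_log_le_abs_add (Nat.not_odd_iff_even.2 he) hk ht hp

end Separation

theorem pow_div_sq_le_of_mul_pow_div_le {n : ℕ} (hn : 2 ≤ n) {K L s c : ℝ} (hK : 0 < K)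
    (hL : 0 < L) (hs : 0 < s) (hc : s * K ^ (n - 1) / (4 * L) ≤ c) :
    K ^ (2 * n - 4) / c ^ 2 ≤ 16 * L ^ 2 / K ^ 2 * s⁻¹ ^ 2 := by
  obtain ⟨j, rfl⟩ : ∃ j, n = j + 2 := ⟨n - 2, by omega⟩
  rw [show 2 * (j + 2) - 4 = 2 * j by omega, show j + 2 - 1 = j + 1 by omega] at *
  calc K ^ (2 * j) / c ^ 2 ≤ K ^ (2 * j) / (s * K ^ (j + 1) / (4 * L)) ^ 2 := by gcongr
    _ = 16 * L ^ 2 / K ^ 2 * s⁻¹ ^ 2 := by field_simp; ring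

theorem pow_div_norm_sub_pow_sq_le {n : ℕ} (hn : 2 ≤ n) {k p : ℤ} {t : ℝ} {lam : ℂ}
    (hk : 1 ≤ log |(k : ℝ)|) (ht : t ∈ Ico (-(π / 2)) (3 * π / 2)) (hp : p ∉ Aset n k t)
    (hlam : ‖lam - ((2 * π * k + t : ℝ) : ℂ) ^ n‖ ≤ |(k : ℝ)| ^ (n - 1) / (4 * log |(k : ℝ)|)) :
    |(k : ℝ)| ^ (2 * n - 4) / ‖lam - ((2 * π * p + t : ℝ) : ℂ) ^ n‖ ^ 2 ≤
      16 * log |(k : ℝ)| ^ 2 / |(k : ℝ)| ^ 2 * (1 + min |(p : ℝ) - k| |(p : ℝ) + k|)⁻¹ ^ 2 := by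
  have hsep := one_add_min_mul_pow_div_log_le (by omega) hk ht hp
  set x := 2 * π * k + t
  set y := 2 * π * p + t
  set L := log |(k : ℝ)|
  set s := 1 + min |(p : ℝ) - k| |(p : ℝ) + k|
  have hL : 0 < L := by linarith
  have hs : 1 ≤ s := le_add_of_nonneg_right (le_min (abs_nonneg _) (abs_nonneg _))
  have hK : 0 < |(k : ℝ)| := one_pos.trans_le (hk.trans (log_le_self (abs_nonneg _)))
  refine pow_div_sq_le_of_mul_pow_div_le hn hK hL (by linarith) ?_
  have htri : |y ^ n - x ^ n| ≤ ‖lam - (y : ℂ) ^ n‖ + ‖lam - (x : ℂ) ^ n‖ := by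
    calc |y ^ n - x ^ n| = ‖(y : ℂ) ^ n - (x : ℂ) ^ n‖ := by
          rw [← Complex.ofReal_pow, ← Complex.ofReal_pow, ← Complex.ofReal_sub,
            Complex.norm_real, norm_eq_abs]
      _ ≤ ‖(y : ℂ) ^ n - lam‖ + ‖lam - (x : ℂ) ^ n‖ := norm_sub_le_norm_sub_add_norm_sub _ _ _
      _ = ‖lam - (y : ℂ) ^ n‖ + ‖lam - (x : ℂ) ^ n‖ := by rw [norm_sub_rev]
  set A := |(k : ℝ)| ^ (n - 1) / L
  have hA : 0 ≤ A := by positivity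
  have hsA : A ≤ s * A := le_mul_of_one_le_left hA hs
  rw [mul_div_assoc] at hsep
  rw [show |(k : ℝ)| ^ (n - 1) / (4 * L) = A / 4 by ring] at hlam
  rw [show s * |(k : ℝ)| ^ (n - 1) / (4 * L) = s * A / 4 by ring]
  linarith

theorem summable_and_tsum_pow_div_norm_sub_pow_sq_le {n : ℕ} (hn : 2 ≤ n) {k : ℤ} {t : ℝ}
    {lam : ℂ} (hk : 1 ≤ log |(k : ℝ)|) (ht : t ∈ Ico (-(π / 2)) (3 * π / 2))
    (hlam : ‖lam - ((2 * π * k + t : ℝ) : ℂ) ^ n‖ ≤ |(k : ℝ)| ^ (n - 1) / (4 * log |(k : ℝ)|)) :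
    Summable (fun p : {p : ℤ // p ∉ Aset n k t} =>
      |(k : ℝ)| ^ (2 * n - 4) / ‖lam - ((2 * π * (p.1 : ℝ) + t : ℝ) : ℂ) ^ n‖ ^ 2) ∧
    ∑' p : {p : ℤ // p ∉ Aset n k t},
        |(k : ℝ)| ^ (2 * n - 4) / ‖lam - ((2 * π * (p.1 : ℝ) + t : ℝ) : ℂ) ^ n‖ ^ 2 ≤
      32 * (∑' q : ℤ, (1 + |(q : ℝ)|)⁻¹ ^ 2) * log |(k : ℝ)| ^ 2 / (k : ℝ) ^ 2 := by
  set w := fun p : ℤ => 16 * log |(k : ℝ)| ^ 2 / |(k : ℝ)| ^ 2 *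
    (1 + min |(p : ℝ) - k| |(p : ℝ) + k|)⁻¹ ^ 2
  have hw : Summable w := (summable_inv_one_add_min_abs_sq k).mul_left _
  have hterm (p : {p : ℤ // p ∉ Aset n k t}) :
      |(k : ℝ)| ^ (2 * n - 4) / ‖lam - ((2 * π * (p.1 : ℝ) + t : ℝ) : ℂ) ^ n‖ ^ 2 ≤ w p :=
    pow_div_norm_sub_pow_sq_le hn hk ht p.2 hlam
  have hsum := (hw.subtype _).of_nonneg_of_le (fun _ => by positivity) hterm
  refine ⟨hsum, ?_⟩
  calc _ ≤ ∑' p : {p : ℤ // p ∉ Aset n k t}, w p := hsum.tsum_le_tsum hterm (hw.subtype _)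
    _ ≤ ∑' p : ℤ, w p := hw.tsum_subtype_le _ _ (fun _ => by positivity)
    _ = 16 * log |(k : ℝ)| ^ 2 / |(k : ℝ)| ^ 2 *
          ∑' p : ℤ, (1 + min |(p : ℝ) - k| |(p : ℝ) + k|)⁻¹ ^ 2 := tsum_mul_left
    _ ≤ 16 * log |(k : ℝ)| ^ 2 / |(k : ℝ)| ^ 2 * (2 * ∑' q : ℤ, (1 + |(q : ℝ)|)⁻¹ ^ 2) := by
        gcongr; exact tsum_inv_one_add_min_abs_sq_le k
    _ = _ := by rw [sq_abs]; ring

/-- Let `n ≥ 2, m ≥ 1` be integers and `c₁ > 0`. There exist a constant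
`C > 0` and a positive integer `N ≥ 3` such that: for every integer `k` with `|k| ≥ N`,
every `t ∈ [−π/2, 3π/2)`, and every `λ ∈ ℂ` with `|λ − (2πk + t)^n| ≤ c₁ |k|^{n−1−1/(2m)}`,
one has `Σ_{p ∈ ℤ, p ∉ A(k,n,t)} |k|^{2n−4} / |λ − (2πp + t)^n|² ≤ C (ln|k|)² / k²`. -/
theorem stmt_7 (n m : ℕ) (hn : 2 ≤ n) (hm : 1 ≤ m) (c₁ : ℝ) (hc₁ : 0 < c₁) :
    ∃ C : ℝ, 0 < C ∧ ∃ N : ℕ, 3 ≤ N ∧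
      ∀ k : ℤ, (N : ℤ) ≤ |k| →
        ∀ t ∈ Set.Ico (-(π/2)) (3*π/2),
          ∀ lam : ℂ,
            ‖lam - ((2*π*(k:ℝ) + t : ℝ) : ℂ)^n‖
              ≤ c₁ * |(k:ℝ)| ^ ((n:ℝ) - 1 - 1/(2*(m:ℝ))) →
            Summable (fun p : {p : ℤ // p ∉ Aset n k t} =>
              |(k:ℝ)|^(2*n-4) / ‖lam - ((2*π*(p.1:ℝ) + t : ℝ) : ℂ)^n‖^2) ∧
            (∑' p : {p : ℤ // p ∉ Aset n k t},
                |(k:ℝ)|^(2*n-4) / ‖lam - ((2*π*(p.1:ℝ) + t : ℝ) : ℂ)^n‖^2)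
              ≤ C * (Real.log |(k:ℝ)|)^2 / (k:ℝ)^2 := by
  obtain ⟨x₀, hx₀⟩ := eventually_atTop.1 <| eventually_mul_rpow_sub_le_pow_div_log
    (r := 1 / (2 * (m : ℝ))) (c := 4 * c₁) (by positivity) (by positivity) (n - 1)
  have hS : 0 < ∑' q : ℤ, (1 + |(q : ℝ)|)⁻¹ ^ 2 :=
    summable_inv_one_add_abs_sq.tsum_pos (fun _ => by positivity) 0 (by simp)
  refine ⟨32 * ∑' q : ℤ, (1 + |(q : ℝ)|)⁻¹ ^ 2, by positivity, max 3 ⌈x₀⌉₊, le_max_left _ _,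
    fun k hk t ht lam hlam => ?_⟩
  have hkN : ((max 3 ⌈x₀⌉₊ : ℕ) : ℝ) ≤ |(k : ℝ)| := by
    rw [← Int.cast_abs]; exact_mod_cast hk
  rw [Nat.cast_max, Nat.cast_ofNat, max_le_iff] at hkN
  have hL : 1 ≤ log |(k : ℝ)| := by
    rw [le_log_iff_exp_le (by linarith [hkN.1])]
    linarith [exp_one_lt_d9, hkN.1]
  refine summable_and_tsum_pow_div_norm_sub_pow_sq_le hn hL ht ?_
  have h := hx₀ _ ((Nat.le_ceil x₀).trans hkN.2)
  rw [Nat.cast_sub (by omega), Nat.cast_one] at h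
  rw [div_mul_eq_div_div_swap]
  linarith
end
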